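/- arXiv:0712.0837 — 2 statements merged into one kernel-verified Lean document; each statement's English description precedes it below -/
import Mathlib

section
/- The matrix Z = (α(i,j))_{i,j∈ℕ⁺} satisfies: (i) α(i·m, j·m) = α(i,j) whenever m is odd; (ii) Z is upper unitriangular, i.e. α(i,j) = 0 for i > j and α(i,i) = 1 for all i; (iii) for all positive integers i and k, Σ_{j ∣ k, j < k} α(i,j) = α(2i, k), which is the entrywise form of the identity Z·D·Z^{-1} = J, where D is the divisor matrix and J has (i,j) entry 1 if j ∈ {i, 2i} and 0 otherwise. -/
/-- `alpha k m` is the number of `k`-tuples `(m₁, …, m_k)` of integers, each `≥ 2`,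
whose product is `m`. -/
noncomputable def alpha (k m : ℕ) : ℕ :=
  Nat.card {f : Fin k → ℕ // (∀ i, 2 ≤ f i) ∧ ∏ i, f i = m}

/-- The `(i,j)` entry `α(i,j)` of the matrix `Z`: writing `i = 2^k · d` with `d` odd
(`k = v₂(i)`), the `i`-th row of `Z` is the `d`-th row of `(D - I)^k`; explicitly
`α(i,j) = α_k(j/d)` if `d ∣ j` (and `k ≥ 1`), `α(i,j) = δ_{i,j}` if `i` is odd. -/
noncomputable def alphaEnt (i j : ℕ) : ℕ :=
  if i.factorization 2 = 0 then (if i = j then 1 else 0)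
  else if (i / 2 ^ (i.factorization 2)) ∣ j then
    alpha (i.factorization 2) (j / (i / 2 ^ (i.factorization 2)))
  else 0

/-!
Write `i = 2^v d` with `d` odd. For `j > 0` both branches of `α(i, j)` are the single expression
`[d ∣ j] α_v(j/d)`, because `α_0(n) = [n = 1]`. Splitting off the first factor of a tuple gives
`α_{v+1}(n) = ∑_{t ∣ n, t < n} α_v(t)`, which is (iii) since doubling `i` raises `v` by one and
keeps `d`. An odd factor `m` keeps `v` and multiplies `d` by `m`, which gives (i); and a product of
`v` factors `≥ 2` is at least `2^v`, with equality only for `(2, …, 2)`, which gives (ii).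
-/

open Finset

lemma Nat.mem_properDivisors_iff_two_le_div {t m : ℕ} (hm : m ≠ 0) :
    t ∈ m.properDivisors ↔ t ∣ m ∧ 2 ≤ m / t := by
  rw [Nat.mem_properDivisors]
  refine and_congr_right fun ⟨c, hc⟩ => ?_
  subst hc
  have ht : 0 < t := Nat.pos_of_ne_zero (left_ne_zero_of_mul hm)
  rw [Nat.mul_div_cancel_left c ht, Nat.lt_mul_iff_one_lt_right ht]
  rfl

lemma Nat.filter_dvd_properDivisors_mul {d m : ℕ} (hd : 0 < d) :
    {j ∈ (d * m).properDivisors | d ∣ j} = m.properDivisors.image (d * ·) := by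
  ext j
  simp only [mem_filter, mem_image, Nat.mem_properDivisors]
  constructor
  · rintro ⟨⟨hjm, hlt⟩, t, rfl⟩
    exact ⟨t, ⟨(Nat.mul_dvd_mul_iff_left hd).1 hjm, (Nat.mul_lt_mul_left hd).1 hlt⟩, rfl⟩
  · rintro ⟨t, ⟨htm, hlt⟩, rfl⟩
    exact ⟨⟨Nat.mul_dvd_mul_left d htm, (Nat.mul_lt_mul_left hd).2 hlt⟩, dvd_mul_right d t⟩

def tuplesGeTwo (k m : ℕ) : Finset (Fin k → ℕ) :=
  {f ∈ Nat.finMulAntidiag k m | ∀ i, 2 ≤ f i}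

lemma mem_tuplesGeTwo {k m : ℕ} {f : Fin k → ℕ} :
    f ∈ tuplesGeTwo k m ↔ (∀ i, 2 ≤ f i) ∧ ∏ i, f i = m := by
  rw [tuplesGeTwo, mem_filter, Nat.mem_finMulAntidiag]
  constructor
  · rintro ⟨⟨hprod, -⟩, h2⟩
    exact ⟨h2, hprod⟩
  · rintro ⟨h2, rfl⟩
    exact ⟨⟨rfl, (prod_pos fun i _ => zero_lt_two.trans_le (h2 i)).ne'⟩, h2⟩

lemma mem_tuplesGeTwo_succ {k m : ℕ} {f : Fin (k + 1) → ℕ} :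
    f ∈ tuplesGeTwo (k + 1) m ↔
      2 ≤ f 0 ∧ Fin.tail f ∈ tuplesGeTwo k (∏ i : Fin k, f i.succ) ∧
        f 0 * ∏ i : Fin k, f i.succ = m := by
  simp only [mem_tuplesGeTwo, Fin.forall_fin_succ, Fin.prod_univ_succ, Fin.tail, and_true,
    and_assoc]

lemma alpha_eq_card (k m : ℕ) : alpha k m = #(tuplesGeTwo k m) := by
  rw [alpha, ← Nat.card_eq_finsetCard]
  exact Nat.card_congr (Equiv.subtypeEquivRight fun _ => mem_tuplesGeTwo.symm)

lemma alpha_zero (m : ℕ) : alpha 0 m = if m = 1 then 1 else 0 := by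
  split_ifs with h <;> simp [alpha, h, eq_comm]

lemma card_filter_prod_tail_eq {k m t : ℕ} (hm : m ≠ 0) (ht : t ∈ m.properDivisors) :
    #{f ∈ tuplesGeTwo (k + 1) m | ∏ i : Fin k, f i.succ = t} = #(tuplesGeTwo k t) := by
  obtain ⟨htm, hdiv⟩ := (Nat.mem_properDivisors_iff_two_le_div hm).1 ht
  have ht0 : 0 < t := Nat.pos_of_mem_properDivisors ht
  refine card_nbij' Fin.tail (fun g : Fin k → ℕ => (Fin.cons (m / t) g : Fin (k + 1) → ℕ))
    ?_ ?_ ?_ ?_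
  · intro f hf
    simp only [mem_coe, mem_filter, mem_tuplesGeTwo_succ] at hf
    exact hf.2 ▸ hf.1.2.1
  · intro g hg
    have hprod : ∏ i, g i = t := (mem_tuplesGeTwo.1 hg).2
    simp only [mem_coe, mem_filter, mem_tuplesGeTwo_succ, Fin.cons_zero, Fin.cons_succ,
      Fin.tail_cons, hprod, and_true]
    exact ⟨hdiv, hg, Nat.div_mul_cancel htm⟩
  · intro f hf
    simp only [mem_coe, mem_filter, mem_tuplesGeTwo_succ] at hf
    obtain ⟨⟨-, -, hmul⟩, hprod⟩ := hf
    have h0 : m / t = f 0 := Nat.div_eq_of_eq_mul_left ht0 (by rw [← hmul, hprod])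
    exact h0 ▸ Fin.cons_self_tail f
  · intro g _
    exact Fin.tail_cons _ _

lemma alpha_succ (k : ℕ) {m : ℕ} (hm : m ≠ 0) :
    alpha (k + 1) m = ∑ t ∈ m.properDivisors, alpha k t := by
  have hmaps : ∀ f ∈ tuplesGeTwo (k + 1) m, ∏ i : Fin k, f i.succ ∈ m.properDivisors := by
    intro f hf
    obtain ⟨h0, -, hmul⟩ := mem_tuplesGeTwo_succ.1 hf
    have htail : 0 < ∏ i : Fin k, f i.succ := Nat.pos_of_ne_zero (right_ne_zero_of_mul (hmul ▸ hm))
    rw [Nat.mem_properDivisors_iff_two_le_div hm, ← hmul, Nat.mul_div_cancel _ htail]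
    exact ⟨Dvd.intro_left _ rfl, h0⟩
  rw [alpha_eq_card, card_eq_sum_card_fiberwise hmaps]
  exact sum_congr rfl fun t ht => (card_filter_prod_tail_eq hm ht).trans (alpha_eq_card k t).symm

lemma two_pow_le_of_mem_tuplesGeTwo {k m : ℕ} {f : Fin k → ℕ} (hf : f ∈ tuplesGeTwo k m) :
    2 ^ k ≤ m := by
  obtain ⟨h2, rfl⟩ := mem_tuplesGeTwo.1 hf
  simpa using pow_card_le_prod univ f 2 fun i _ => h2 i

lemma alpha_eq_zero_of_lt {k m : ℕ} (h : m < 2 ^ k) : alpha k m = 0 := by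
  rw [alpha_eq_card, card_eq_zero, eq_empty_iff_forall_notMem]
  exact fun f hf => (two_pow_le_of_mem_tuplesGeTwo hf).not_gt h

lemma tuplesGeTwo_two_pow (k : ℕ) : tuplesGeTwo k (2 ^ k) = {fun _ => 2} := by
  refine eq_singleton_iff_unique_mem.2 ⟨mem_tuplesGeTwo.2 ⟨fun _ => le_rfl, by simp⟩, ?_⟩
  intro f hf
  obtain ⟨h2, hprod⟩ := mem_tuplesGeTwo.1 hf
  by_contra hne
  obtain ⟨i, hi⟩ := Function.ne_iff.1 hne
  have hlt : ∏ _i : Fin k, 2 < ∏ i, f i :=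
    prod_lt_prod (fun _ _ => zero_lt_two) (fun i _ => h2 i) ⟨i, mem_univ i, (h2 i).lt_of_ne' hi⟩
  simp [hprod] at hlt

lemma alpha_two_pow (k : ℕ) : alpha k (2 ^ k) = 1 := by
  rw [alpha_eq_card, tuplesGeTwo_two_pow, card_singleton]

/-- The `(d, j)` entry of `(D - I)^k`. -/
noncomputable def alphaRow (k d j : ℕ) : ℕ :=
  if d ∣ j then alpha k (j / d) else 0

lemma sum_properDivisors_alphaRow (k : ℕ) {d n : ℕ} (hd : 0 < d) (hn : 0 < n) :
    ∑ j ∈ n.properDivisors, alphaRow k d j = alphaRow (k + 1) d n := by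
  simp only [alphaRow]
  rw [← sum_filter]
  split_ifs with hdn
  · obtain ⟨m, rfl⟩ := hdn
    rw [Nat.filter_dvd_properDivisors_mul hd,
      sum_image fun _ _ _ _ h => Nat.eq_of_mul_eq_mul_left hd h,
      Nat.mul_div_cancel_left m hd, alpha_succ k (right_ne_zero_of_mul hn.ne')]
    exact sum_congr rfl fun t _ => by rw [Nat.mul_div_cancel_left t hd]
  · refine sum_eq_zero fun j hj => absurd ?_ hdn
    rw [mem_filter] at hj
    exact hj.2.trans (Nat.mem_properDivisors.1 hj.1).1

lemma alphaRow_mul_mul (k : ℕ) {d j m : ℕ} (hm : 0 < m) :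
    alphaRow k (d * m) (j * m) = alphaRow k d j := by
  simp only [alphaRow, Nat.mul_dvd_mul_iff_right hm, Nat.mul_div_mul_right _ _ hm]

lemma alphaRow_eq_zero_of_lt {k d j : ℕ} (h : j < 2 ^ k * d) : alphaRow k d j = 0 := by
  rw [alphaRow, alpha_eq_zero_of_lt (Nat.div_lt_of_lt_mul (h.trans_eq (mul_comm _ _))), ite_self]

lemma alphaRow_two_pow_mul (k : ℕ) {d : ℕ} (hd : 0 < d) : alphaRow k d (2 ^ k * d) = 1 := by
  rw [alphaRow, if_pos (dvd_mul_left d _), Nat.mul_div_cancel _ hd, alpha_two_pow]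

lemma alphaEnt_eq_alphaRow (i : ℕ) {j : ℕ} (hj : 0 < j) :
    alphaEnt i j = alphaRow (i.factorization 2) (ordCompl[2] i) j := by
  rw [alphaEnt, alphaRow]
  by_cases hv : i.factorization 2 = 0
  · rw [if_pos hv, hv, pow_zero, Nat.div_one, alpha_zero]
    by_cases hij : i = j
    · rw [if_pos hij, if_pos (hij ▸ dvd_rfl), hij, Nat.div_self hj, if_pos rfl]
    · rw [if_neg hij]
      split_ifs with hdvd hdiv
      exacts [absurd (Nat.eq_of_dvd_of_div_eq_one hdvd hdiv) hij, rfl, rfl]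
  · rw [if_neg hv]

lemma Nat.factorization_two_mul_odd (i : ℕ) {m : ℕ} (hm : Odd m) :
    (i * m).factorization 2 = i.factorization 2 := by
  rcases eq_or_ne i 0 with rfl | hi
  · rw [zero_mul]
  rw [Nat.factorization_mul hi hm.pos.ne', Finsupp.add_apply,
    Nat.factorization_eq_zero_of_not_dvd hm.not_two_dvd_nat, add_zero]

lemma Nat.ordCompl_two_mul_odd (i : ℕ) {m : ℕ} (hm : Odd m) :
    ordCompl[2] (i * m) = ordCompl[2] i * m := by
  rw [Nat.ordCompl_mul, (Nat.ordCompl_eq_self_iff_zero_or_not_dvd m Nat.prime_two).2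
    (Or.inr hm.not_two_dvd_nat)]

lemma Nat.factorization_two_two_mul {i : ℕ} (hi : i ≠ 0) :
    (2 * i).factorization 2 = i.factorization 2 + 1 := by
  rw [Nat.factorization_mul two_ne_zero hi, Finsupp.add_apply,
    Nat.Prime.factorization_self Nat.prime_two, add_comm]

lemma Nat.ordCompl_two_two_mul (i : ℕ) : ordCompl[2] (2 * i) = ordCompl[2] i := by
  simpa using Nat.ordCompl_self_pow_mul i 1 Nat.prime_two

theorem stmt6 :
    -- (i) `α(im, jm) = α(i,j)` for `m` odd
    (∀ i j m : ℕ, 0 < i → 0 < j → Odd m → alphaEnt (i * m) (j * m) = alphaEnt i j) ∧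
    -- (ii) `Z` is upper unitriangular
    (∀ i j : ℕ, 0 < i → 0 < j → j < i → alphaEnt i j = 0) ∧
    (∀ i : ℕ, 0 < i → alphaEnt i i = 1) ∧
    -- (iii) entrywise form of `Z · D · Z⁻¹ = J`
    (∀ i k : ℕ, 0 < i → 0 < k →
      ∑ j ∈ k.properDivisors, alphaEnt i j = alphaEnt (2 * i) k) := by
  refine ⟨fun i j m hi hj hm => ?_, fun i j hi hj hji => ?_, fun i hi => ?_, fun i k hi hk => ?_⟩
  · rw [alphaEnt_eq_alphaRow _ (mul_pos hj hm.pos), alphaEnt_eq_alphaRow _ hj,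
      Nat.ordCompl_two_mul_odd i hm, Nat.factorization_two_mul_odd i hm,
      alphaRow_mul_mul _ hm.pos]
  · rw [alphaEnt_eq_alphaRow _ hj]
    exact alphaRow_eq_zero_of_lt (hji.trans_eq (Nat.ordProj_mul_ordCompl_eq_self i 2).symm)
  · have hdiag := alphaRow_two_pow_mul (i.factorization 2) (Nat.ordCompl_pos 2 hi.ne')
    rwa [Nat.ordProj_mul_ordCompl_eq_self, ← alphaEnt_eq_alphaRow _ hi] at hdiag
  · rw [alphaEnt_eq_alphaRow _ hk, Nat.ordCompl_two_two_mul, Nat.factorization_two_two_mul hi.ne',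
      ← sum_properDivisors_alphaRow _ (Nat.ordCompl_pos 2 hi.ne') hk]
    exact sum_congr rfl fun j hj => alphaEnt_eq_alphaRow i (Nat.pos_of_mem_properDivisors hj)
end

section
/- Define the arithmetic function a by a(n) = α_1(n) + Σ_{ℓ≥4} (−1)^ℓ α_{ℓ−1}(n) · Σ_{k=2}^{⌊ℓ/2⌋} b_k · C(ℓ−k−2, k−2) for n ≥ 1 (a finite sum, since α_{ℓ−1}(n) = 0 once ℓ−1 > Ω(n)). Then in the ring of arithmetic functions under Dirichlet convolution, with ζ the arithmetic function constantly 1 and 1 the convolution identity (the function equal to 1 at n=1 and 0 elsewhere), the following identity holds: (ζ − 1) * a * a + ζ * a − ζ * (ζ − 1) = 0. -/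
/-- The signed Catalan numbers `b_k = (-1)^{k-1} · Catalan(k-1)`. -/
def bcat (k : ℕ) : ℤ := (-1) ^ (k - 1) * (catalan (k - 1) : ℤ)

/-- `Omega m` is the number of prime factors of `m` counted with multiplicity. -/
def Omega (m : ℕ) : ℕ := m.primeFactorsList.length

/-- The coefficients
`a(n) = α₁(n) + Σ_{ℓ ≥ 4} (-1)^ℓ α_{ℓ-1}(n) Σ_{k=2}^{⌊ℓ/2⌋} b_k C(ℓ-k-2, k-2)`;
the sum over `ℓ` is finite since `α_{ℓ-1}(n) = 0` once `ℓ - 1 > Ω(n)`,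
so it may be truncated at `ℓ = Ω(n) + 1`. -/
noncomputable def aCoef (n : ℕ) : ℂ :=
  (alpha 1 n : ℂ) +
    ∑ l ∈ Finset.Icc 4 (Omega n + 1),
      (-1 : ℂ) ^ l * (alpha (l - 1) n : ℂ) *
        ∑ k ∈ Finset.Icc 2 (l / 2), (bcat k : ℂ) * (((l - k - 2).choose (k - 2) : ℕ) : ℂ)

/-- The arithmetic function with values `a(n)`. -/
noncomputable def aFun : ArithmeticFunction ℂ :=
  ⟨fun n => if n = 0 then 0 else aCoef n, by simp⟩

/-- The arithmetic function `ζ` with `ζ(n) = 1` for all `n ≥ 1`. -/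
noncomputable def zetaC : ArithmeticFunction ℂ :=
  ⟨fun n => if n = 0 then 0 else 1, by simp⟩

/-! With `u = ζ - 1`, `u ^ j (n) = α_j(n)` counts the ordered factorizations of `n` into
`j` factors `≥ 2`, so it vanishes for `j > Ω(n)`. Hence on the divisors of `n`, `a` agrees with
`P(u)`, where `P` is the truncation at degree `Ω(n)` of the power series
`A = X · C(-X² / (1 + X))` and `C = 1 + X C²` is the Catalan series: expanding
`C(-X² / (1 + X))` produces exactly the signed Catalan numbers and binomial coefficients in the
definition of `a`. The functional equation of `C` becomes `X A² + (1 + X) A = (1 + X) X`, so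
`X P² + (1 + X) P - (1 + X) X` is divisible by `X ^ (Ω(n) + 1)`, and substituting `u` for `X`
(with `ζ = 1 + u`) gives the identity at `n`. -/

open Finset PowerSeries

namespace ArithmeticFunction

open scoped ArithmeticFunction.Omega

theorem sum_apply {ι M : Type*} [AddCommMonoid M] (s : Finset ι) (f : ι → ArithmeticFunction M)
    (n : ℕ) : (∑ i ∈ s, f i) n = ∑ i ∈ s, f i n :=
  map_sum (⟨⟨fun g => g n, rfl⟩, fun _ _ => rfl⟩ : ArithmeticFunction M →+ M) f s

theorem cardFactors_le_of_dvd {d n : ℕ} (hd : d ∣ n) (hn : n ≠ 0) : Ω d ≤ Ω n := by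
  simp only [cardFactors_apply]
  exact (Nat.primeFactorsList_sublist_of_dvd hd hn).length_le

theorem pow_apply_eq_zero_of_cardFactors_lt {R : Type*} [Semiring R] {f : ArithmeticFunction R}
    (hf : f 1 = 0) {k n : ℕ} (h : Ω n < k) : (f ^ k) n = 0 := by
  induction k generalizing n with
  | zero => omega
  | succ k ih =>
    rw [pow_succ', mul_apply]
    refine sum_eq_zero fun x hx => ?_
    obtain ⟨hx, hn⟩ := Nat.mem_divisorsAntidiagonal.mp hx
    rcases eq_or_ne x.1 1 with h1 | h1
    · simp [h1, hf]
    · have h0 : x.1 ≠ 0 := left_ne_zero_of_mul (hx ▸ hn)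
      have h2 : x.2 ≠ 0 := right_ne_zero_of_mul (hx ▸ hn)
      have : 0 < Ω x.1 := cardFactors_pos_iff_one_lt.mpr (by omega)
      rw [← hx, cardFactors_mul h0 h2] at h
      rw [ih (by omega), mul_zero]

variable {R : Type*} [CommSemiring R]

theorem pow_apply_eq_sum_finMulAntidiag (f : ArithmeticFunction R) (k n : ℕ) :
    (f ^ k) n = ∑ x ∈ Nat.finMulAntidiag k n, ∏ i, f (x i) := by
  induction k generalizing n with
  | zero =>
    rw [pow_zero, one_apply]
    by_cases hn : n = 1
    · simp [hn, Nat.finMulAntidiag_one]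
    · simp [Nat.finMulAntidiag_zero_left hn, hn]
  | succ k ih =>
    rw [pow_succ', mul_apply]
    simp_rw [ih, mul_sum]
    rw [sum_sigma']
    refine sum_nbij' (fun x => Fin.cons x.1.1 x.2)
      (fun (y : Fin (k + 1) → ℕ) => ⟨(y 0, ∏ i, Fin.tail y i), Fin.tail y⟩) ?_ ?_ ?_ ?_ ?_
    · rintro ⟨⟨a, b⟩, x⟩ h
      simp_all [Fin.prod_univ_succ]
    · intro y hy
      simp only [mem_sigma, Nat.mem_divisorsAntidiagonal, Nat.mem_finMulAntidiag,
        Fin.prod_univ_succ] at hy ⊢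
      exact ⟨hy, trivial, right_ne_zero_of_mul (hy.1 ▸ hy.2)⟩
    · rintro ⟨⟨a, b⟩, x⟩ h
      simp_all
    · intro y _
      simp
    · rintro ⟨⟨a, b⟩, x⟩ _
      simp [Fin.prod_univ_succ]

def divisorsVanishingIdeal (n : ℕ) : Ideal (ArithmeticFunction R) where
  carrier := {f | ∀ d, d ∣ n → f d = 0}
  add_mem' hf hg d hd := by simp [hf d hd, hg d hd]
  zero_mem' _ _ := rfl
  smul_mem' g f hf d hd := by
    rw [smul_eq_mul, mul_apply]
    refine sum_eq_zero fun x hx => ?_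
    rw [hf x.2 ((Nat.dvd_of_mem_divisors (Nat.snd_mem_divisors_of_mem_antidiagonal hx)).trans hd),
      mul_zero]

theorem pow_mem_divisorsVanishingIdeal {f : ArithmeticFunction R} (hf : f 1 = 0) {k n : ℕ}
    (hn : n ≠ 0) (h : Ω n < k) : f ^ k ∈ divisorsVanishingIdeal n := fun _ hd =>
  pow_apply_eq_zero_of_cardFactors_lt hf ((cardFactors_le_of_dvd hd hn).trans_lt h)

end ArithmeticFunction

def catalanChooseSum (l : ℕ) : ℤ := ∑ k ∈ Icc 2 (l / 2), bcat k * (l - k - 2).choose (k - 2)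

theorem catalanChooseSum_eq_zero_of_lt_four {l : ℕ} (hl : l < 4) : catalanChooseSum l = 0 :=
  sum_eq_zero fun k hk => by rw [mem_Icc] at hk; omega

namespace PowerSeries

variable (R : Type*) [CommRing R]

-- Rescaling `X ↦ -X` turns `(1 - X)⁻¹` into `(1 + X)⁻¹`.
noncomputable def sqDivOneAddX : R⟦X⟧ := X ^ 2 * rescale (-1) (invOneSubPow R 1 : R⟦X⟧)

theorem one_add_X_mul_sqDivOneAddX : (1 + X) * sqDivOneAddX R = X ^ 2 := by
  have h := congrArg (rescale (-1 : R)) (invOneSubPow R 1).inv_val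
  rw [invOneSubPow_inv_eq_one_sub_pow, map_mul, pow_one, map_sub, map_one, rescale_X, map_neg,
    map_one] at h
  rw [sqDivOneAddX]
  linear_combination X ^ 2 * h

theorem coeff_sqDivOneAddX_pow_succ (d n : ℕ) :
    coeff n (sqDivOneAddX R ^ (d + 1)) =
      if 2 * (d + 1) ≤ n then (-1) ^ n * ((n - d - 2).choose d : R) else 0 := by
  have hpow : (invOneSubPow R 1 : R⟦X⟧) ^ (d + 1) = invOneSubPow R (d + 1) := by
    simp [invOneSubPow_eq_inv_one_sub_pow]
  rw [sqDivOneAddX, mul_pow, ← pow_mul, ← map_pow, hpow, coeff_X_pow_mul', coeff_rescale,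
    invOneSubPow_val_succ_eq_mk_add_choose, coeff_mk]
  split_ifs with h
  · obtain ⟨m, rfl⟩ := Nat.exists_eq_add_of_le h
    rw [Nat.add_sub_cancel_left, pow_add, pow_mul, neg_one_sq, one_pow, one_mul]
    congr 3
    omega
  · rfl

theorem coeff_neg_sqDivOneAddX_pow (d n : ℕ) :
    coeff n ((-sqDivOneAddX R) ^ d) = (-1) ^ d * coeff n (sqDivOneAddX R ^ d) := by
  rw [neg_pow, ← map_one (C (R := R)), ← map_neg, ← map_pow, coeff_C_mul]

theorem hasSubst_neg_sqDivOneAddX : HasSubst (-sqDivOneAddX R) :=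
  HasSubst.of_constantCoeff_zero' (by simp [sqDivOneAddX])

noncomputable def aSeries : R⟦X⟧ :=
  X * (map (Nat.castRingHom R) catalanSeries).subst (-sqDivOneAddX R)

theorem X_mul_aSeries_sq_add_one_add_X_mul_aSeries :
    X * aSeries R ^ 2 + (1 + X) * aSeries R = (1 + X) * X := by
  set G := (map (Nat.castRingHom R) catalanSeries).subst (-sqDivOneAddX R)
  have hG : G ^ 2 * -sqDivOneAddX R + 1 = G := by
    have := congrArg (fun f => substAlgHom (τ := Unit) (hasSubst_neg_sqDivOneAddX R)
      (map (Nat.castRingHom R) f)) catalanSeries_sq_mul_X_add_one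
    simpa only [map_add, map_mul, map_pow, map_one, map_X, substAlgHom_X, coe_substAlgHom]
      using this
  rw [aSeries]
  linear_combination (-(1 + X) * X) * hG + (-X * G ^ 2) * one_add_X_mul_sqDivOneAddX R

theorem coeff_aSeries (j : ℕ) :
    coeff j (aSeries R) =
      (if j = 1 then 1 else 0) + (-1) ^ (j + 1) * (catalanChooseSum (j + 1) : R) := by
  rcases j with _ | m
  · simp [aSeries, catalanChooseSum]
  rw [aSeries, coeff_succ_X_mul, coeff_subst' (hasSubst_neg_sqDivOneAddX R),
    finsum_eq_sum_of_support_subset _ (s := range (m / 2 + 1)) ?_, sum_range_succ']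
  · have hIcc : Icc 2 ((m + 1 + 1) / 2) = (range (m / 2)).map (addRightEmbedding 2) := by
      ext k
      simp only [mem_Icc, mem_map, mem_range, addRightEmbedding_apply]
      constructor
      · intro hk
        exact ⟨k - 2, by omega, by omega⟩
      · rintro ⟨e, he, rfl⟩
        omega
    rw [catalanChooseSum, hIcc, sum_map, add_comm, Int.cast_sum, mul_sum]
    congr 1
    · simp
    · refine sum_congr rfl fun e he => ?_
      rw [mem_range] at he
      rw [coeff_neg_sqDivOneAddX_pow, coeff_sqDivOneAddX_pow_succ, if_pos (by omega),
        addRightEmbedding_apply, bcat, show m + 1 + 1 - (e + 2) - 2 = m - e - 2 by omega,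
        show e + 2 - 2 = e by omega, show e + 2 - 1 = e + 1 by omega]
      simp only [coeff_map, catalanSeries_coeff, eq_natCast, smul_eq_mul]
      push_cast
      ring
  · intro d hd
    rw [Function.mem_support] at hd
    rw [mem_coe, mem_range]
    by_contra! h
    obtain ⟨e, rfl⟩ : ∃ e, d = e + 1 := ⟨d - 1, by omega⟩
    rw [coeff_neg_sqDivOneAddX_pow, coeff_sqDivOneAddX_pow_succ, if_neg (by omega)] at hd
    simp at hd

theorem X_pow_succ_dvd_trunc_aSeries (N : ℕ) :
    (Polynomial.X : Polynomial R) ^ (N + 1) ∣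
      Polynomial.X * trunc (N + 1) (aSeries R) ^ 2 + (1 + Polynomial.X) * trunc (N + 1) (aSeries R)
        - (1 + Polynomial.X) * Polynomial.X := by
  set P := trunc (N + 1) (aSeries R)
  have hP : X ^ (N + 1) ∣ (P : R⟦X⟧) - aSeries R := by
    refine X_pow_dvd_iff.mpr fun m hm => ?_
    simp [P, coeff_trunc, hm]
  have hQ : X ^ (N + 1) ∣ ((Polynomial.X * P ^ 2 + (1 + Polynomial.X) * P
      - (1 + Polynomial.X) * Polynomial.X : Polynomial R) : R⟦X⟧) := by
    have hfactor : ((Polynomial.X * P ^ 2 + (1 + Polynomial.X) * P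
        - (1 + Polynomial.X) * Polynomial.X : Polynomial R) : R⟦X⟧) =
        ((P : R⟦X⟧) - aSeries R) * (X * ((P : R⟦X⟧) + aSeries R) + 1 + X) := by
      push_cast
      linear_combination X_mul_aSeries_sq_add_one_add_X_mul_aSeries R
    rw [hfactor]
    exact dvd_mul_of_dvd_left hP _
  refine Polynomial.X_pow_dvd_iff.mpr fun d hd => ?_
  rw [← Polynomial.coeff_coe]
  exact X_pow_dvd_iff.mp hQ d hd

end PowerSeries

open ArithmeticFunction

theorem Omega_eq_cardFactors (n : ℕ) : Omega n = cardFactors n :=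
  cardFactors_apply.symm

theorem zetaC_sub_one_apply (m : ℕ) : (zetaC - 1) m = if 2 ≤ m then 1 else 0 := by
  change zetaC m - (1 : ArithmeticFunction ℂ) m = _
  rw [one_apply, zetaC, coe_mk]
  rcases m with _ | _ | m <;> simp

theorem alpha_eq_pow_apply (j n : ℕ) : (alpha j n : ℂ) = ((zetaC - 1) ^ j) n := by
  have hmem : ∀ x : Fin j → ℕ, x ∈ {x ∈ Nat.finMulAntidiag j n | ∀ i, 2 ≤ x i} ↔
      (∀ i, 2 ≤ x i) ∧ ∏ i, x i = n := by
    intro x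
    simp only [mem_filter, Nat.mem_finMulAntidiag]
    constructor
    · rintro ⟨⟨hprod, -⟩, h2⟩
      exact ⟨h2, hprod⟩
    · rintro ⟨h2, rfl⟩
      exact ⟨⟨rfl, prod_ne_zero_iff.mpr fun i _ => by have := h2 i; omega⟩, h2⟩
  rw [alpha, ← Nat.card_congr (Equiv.subtypeEquivRight hmem), Nat.card_eq_finsetCard,
    pow_apply_eq_sum_finMulAntidiag]
  simp only [zetaC_sub_one_apply, Fintype.prod_boole]
  rw [natCast_card_filter]
  exact sum_congr rfl fun x _ => by congr

theorem alpha_eq_zero_of_Omega_lt {j n : ℕ} (h : Omega n < j) : alpha j n = 0 := by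
  rw [Omega_eq_cardFactors] at h
  exact_mod_cast (alpha_eq_pow_apply j n).trans
    (pow_apply_eq_zero_of_cardFactors_lt (by simp [zetaC_sub_one_apply]) h)

theorem aCoef_eq_sum {n N : ℕ} (hN : Omega n ≤ N) :
    aCoef n = ∑ j ∈ range (N + 1), coeff j (aSeries ℂ) * alpha j n := by
  simp only [coeff_aSeries, add_mul, sum_add_distrib, ite_mul, one_mul, zero_mul, sum_ite_eq',
    mem_range]
  rw [aCoef]
  congr 1
  · split_ifs with h
    · rfl
    · rw [alpha_eq_zero_of_Omega_lt (by omega), Nat.cast_zero]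
  · set g : ℕ → ℂ := fun l => (-1) ^ l * alpha (l - 1) n * catalanChooseSum l
    have hshift : ∑ j ∈ range (N + 1), (-1) ^ (j + 1) * (catalanChooseSum (j + 1) : ℂ) *
        alpha j n = ∑ l ∈ (range (N + 1)).map (addRightEmbedding 1), g l := by
      rw [sum_map]
      refine sum_congr rfl fun j _ => ?_
      simp only [g, addRightEmbedding_apply, Nat.add_sub_cancel]
      ring
    rw [hshift]
    refine (sum_congr rfl fun l _ => by simp [g, catalanChooseSum]).trans (sum_subset ?_ ?_)
    · intro l hl
      simp only [mem_Icc, mem_map, mem_range, addRightEmbedding_apply] at hl ⊢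
      exact ⟨l - 1, by omega, by omega⟩
    · intro l hl hl'
      simp only [mem_Icc, mem_map, mem_range, addRightEmbedding_apply, not_and_or] at hl hl'
      rcases lt_or_ge l 4 with h4 | h4
      · simp [g, catalanChooseSum_eq_zero_of_lt_four h4]
      · simp [g, alpha_eq_zero_of_Omega_lt (show Omega n < l - 1 by omega)]

theorem aFun_apply {n : ℕ} (hn : n ≠ 0) : aFun n = aCoef n :=
  if_neg hn

theorem aFun_sub_aeval_trunc_mem {n N : ℕ} (hn : n ≠ 0) (hN : Omega n ≤ N) :
    aFun - Polynomial.aeval (zetaC - 1) (trunc (N + 1) (aSeries ℂ)) ∈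
      divisorsVanishingIdeal n := by
  intro d hd
  have hd0 : d ≠ 0 := ne_zero_of_dvd_ne_zero hn hd
  have hΩ : Omega d ≤ N := by
    rw [Omega_eq_cardFactors] at hN ⊢
    exact (cardFactors_le_of_dvd hd hn).trans hN
  rw [Polynomial.aeval_eq_sum_range' (natDegree_trunc_lt _ _)]
  change aFun d - (∑ j ∈ range (N + 1), _ : ArithmeticFunction ℂ) d = 0
  rw [aFun_apply hd0, aCoef_eq_sum hΩ, ArithmeticFunction.sum_apply, ← sum_sub_distrib]
  refine sum_eq_zero fun j hj => ?_
  simp [coeff_trunc, mem_range.mp hj, alpha_eq_pow_apply]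

/-- In the ring of arithmetic functions under Dirichlet convolution,
`(ζ − 1) * a * a + ζ * a − ζ * (ζ − 1) = 0`. -/
theorem stmt17 :
    (zetaC - 1) * aFun * aFun + zetaC * aFun - zetaC * (zetaC - 1) = 0 := by
  ext n
  rw [ArithmeticFunction.zero_apply]
  rcases eq_or_ne n 0 with rfl | hn
  · exact ArithmeticFunction.map_zero
  set u := zetaC - 1
  set P := trunc (Omega n + 1) (aSeries ℂ)
  have hP := aFun_sub_aeval_trunc_mem hn le_rfl
  have hQ : Polynomial.aeval u (Polynomial.X * P ^ 2 + (1 + Polynomial.X) * P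
      - (1 + Polynomial.X) * Polynomial.X) ∈ divisorsVanishingIdeal n := by
    obtain ⟨Q, hQ⟩ := X_pow_succ_dvd_trunc_aSeries ℂ (Omega n)
    rw [hQ, map_mul, map_pow, Polynomial.aeval_X]
    refine Ideal.mul_mem_right _ _ (pow_mem_divisorsVanishingIdeal ?_ hn ?_)
    · simp [u, zetaC_sub_one_apply]
    · rw [← Omega_eq_cardFactors]
      omega
  have hsplit : u * aFun * aFun + (1 + u) * aFun - (1 + u) * u =
      Polynomial.aeval u (Polynomial.X * P ^ 2 + (1 + Polynomial.X) * P
        - (1 + Polynomial.X) * Polynomial.X)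
      + (aFun - Polynomial.aeval u P) * (u * (aFun + Polynomial.aeval u P) + 1 + u) := by
    simp only [map_sub, map_add, map_mul, map_pow, map_one, Polynomial.aeval_X]
    ring
  rw [show zetaC = 1 + u by simp [u], hsplit]
  exact Ideal.add_mem _ hQ (Ideal.mul_mem_right _ _ hP) n dvd_rfl
end
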